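/- arXiv:1111.0655 — 4 statements merged into one kernel-verified Lean document; each statement's English description precedes it below -/
import Mathlib

section
/- If f is an irreducible polynomial of prime degree p over a field F of characteristic 0, and every root of f is a rational function over F of a single fixed root, then f is solvable by radicals. -/
/-!
Since all roots of `f` lie in `F⟮α⟯`, the splitting field `K` equals `F⟮α⟯`, so `[K : F] = p`.
By Artin's theorem `|Aut(K/F)| = [K : K^Aut(K/F)]`, which divides `[K : F] = p`; a group of order
dividing a prime is cyclic, hence solvable.
-/

open Polynomial Module IntermediateField

section

variable {F E : Type*} [Field F] [Field E] [Algebra F E]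

theorem card_aut_dvd_finrank [FiniteDimensional F E] : Nat.card Gal(E/F) ∣ finrank F E := by
  rw [← Subgroup.card_top, ← finrank_fixedField_eq_card]
  exact finrank_dvd_finrank_left F _ E

theorem minpoly.natDegree_eq_of_irreducible {f : F[X]} (hf : Irreducible f) {α : E}
    (hα : Polynomial.aeval α f = 0) : (minpoly F α).natDegree = f.natDegree := by
  rw [← minpoly.eq_of_irreducible hf hα,
    natDegree_mul_C (inv_ne_zero (leadingCoeff_ne_zero.mpr hf.ne_zero))]

theorem IntermediateField.finrank_eq_natDegree_of_adjoin_eq_top {f : F[X]} (hf : Irreducible f)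
    {α : E} (hα : aeval α f = 0) (htop : F⟮α⟯ = ⊤) : finrank F E = f.natDegree := by
  have hint : IsIntegral F α := IsAlgebraic.isIntegral ⟨f, hf.ne_zero, hα⟩
  rw [← finrank_top', ← htop, adjoin.finrank hint, minpoly.natDegree_eq_of_irreducible hf hα]

theorem IntermediateField.eq_top_of_rootSet_subset (f : F[X]) [IsSplittingField F E f]
    {K : IntermediateField F E} (h : f.rootSet E ⊆ K) : K = ⊤ := by
  rwa [← toSubalgebra_inj, top_toSubalgebra, eq_top_iff, ← IsSplittingField.adjoin_rootSet E f,
    Algebra.adjoin_le_iff]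

end

theorem Group.isSolvable_of_card_dvd_prime {G : Type*} [Group G] {p : ℕ} (hp : p.Prime)
    (h : Nat.card G ∣ p) : Group.IsSolvable G := by
  have : Fact p.Prime := ⟨hp⟩
  have := isCyclic_of_card_dvd_prime h
  exact Group.isSolvable_of_comm Std.Commutative.comm

theorem stmt_1_general {F : Type*} [Field F] (p : ℕ) (hp : p.Prime)
    (f : Polynomial F) (hirr : Irreducible f) (hdeg : f.natDegree = p)
    (α : f.SplittingField) (hα : α ∈ f.rootSet f.SplittingField)
    (hroots : ∀ c ∈ f.rootSet f.SplittingField, c ∈ IntermediateField.adjoin F {α}) :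
    IsSolvable f.Gal := by
  have htop : F⟮α⟯ = ⊤ := eq_top_of_rootSet_subset f hroots
  have hfinrank := finrank_eq_natDegree_of_adjoin_eq_top hirr (mem_rootSet.mp hα).2 htop
  exact Group.isSolvable_of_card_dvd_prime hp (hdeg ▸ hfinrank ▸ card_aut_dvd_finrank)

/-- Abel's 1829 criterion: if `f` is irreducible of prime degree over a field of
characteristic zero and every root of `f` is a rational function over `F` of a single
fixed root `α`, then `f` is solvable by radicals (its Galois group is solvable). -/
theorem stmt_1 {F : Type*} [Field F] [CharZero F] (p : ℕ) (hp : p.Prime)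
    (f : Polynomial F) (hirr : Irreducible f) (hdeg : f.natDegree = p)
    (α : f.SplittingField) (hα : α ∈ f.rootSet f.SplittingField)
    (hroots : ∀ c ∈ f.rootSet f.SplittingField, c ∈ IntermediateField.adjoin F {α}) :
    IsSolvable f.Gal :=
  stmt_1_general p hp f hirr hdeg α hα hroots
end

section
/- For an irreducible polynomial of prime degree p over a field of characteristic 0, the polynomial is solvable by radicals if and only if its Galois group, viewed as a subgroup of the symmetric group S_p acting on the p roots, is conjugate to a subgroup of the group of affine maps x ↦ ax + b on ℤ/pℤ. -/
/-!
If `G` acts by affine maps of `ZMod p`, taking linear parts is a homomorphism `G → (ZMod p)ˣ`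
whose kernel acts by translations, so `G` is abelian-by-abelian.

Conversely, let `G` be solvable and transitive of prime degree `p`. The last nontrivial term `N`
of its derived series is an abelian normal subgroup. Its orbits are blocks of `G`, so `N` is
transitive, and an abelian transitive faithful group is regular: `N ≅ ZMod p` and an orbit map
identifies the roots with `ZMod p`. In these coordinates `g ∈ G` acts as the translation by
`g • x₀` composed with conjugation by `g` on `N`, an additive automorphism of `ZMod p`, that is,
multiplication by a unit.
-/

open MulAction

theorem ZMod.addAut_apply_eq_mul {n : ℕ} (ψ : AddAut (ZMod n)) (x : ZMod n) :
    ψ x = ((ZMod.AddAutEquivUnits n ψ).toMul : ZMod n) * x := by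
  conv_lhs => rw [← (ZMod.AddAutEquivUnits n).symm_apply_apply ψ]
  rw [ZMod.AddAutEquivUnits_symm_apply]
  rfl

section Affine

variable {G α R : Type*} [Group G] [MulAction G α] [CommRing R]

theorem eq_and_eq_of_forall_mul_add_eq {a a' b b' : R} (h : ∀ k, a * k + b = a' * k + b') :
    a = a' ∧ b = b' := by
  have h₀ := h 0
  have h₁ := h 1
  simp only [mul_zero, zero_add, mul_one] at h₀ h₁
  exact ⟨add_right_cancel (h₀ ▸ h₁), h₀⟩

theorem isSolvable_of_forall_exists_affine [FaithfulSMul G α] (e : α ≃ R)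
    (h : ∀ g : G, ∃ (a : Rˣ) (b : R), ∀ x, e (g • x) = a * e x + b) : Group.IsSolvable G := by
  choose A B hAB using h
  have hAB' (g : G) (k : R) : e (g • e.symm k) = A g * k + B g := by
    rw [hAB, e.apply_symm_apply]
  have hA_mul (g h : G) : A (g * h) = A g * A h := by
    refine Units.ext (eq_and_eq_of_forall_mul_add_eq
      (b := B (g * h)) (b' := A g * B h + B g) fun k ↦ ?_).1
    rw [← hAB', mul_smul, ← e.symm_apply_apply (h • _), hAB', hAB', Units.val_mul]
    ring
  let χ : G →* Rˣ := MonoidHom.mk' A hA_mul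
  have hker_comm (g h : χ.ker) : g * h = h * g := by
    have hg : A g = 1 := g.2
    have hh : A h = 1 := h.2
    refine Subtype.ext (FaithfulSMul.eq_of_smul_eq_smul (α := α) fun x ↦ e.injective ?_)
    simp only [Subgroup.coe_mul, mul_smul, hAB, hg, hh, Units.val_one, one_mul]
    ring
  have := Group.isSolvable_of_comm hker_comm
  exact Group.isSolvable_of_ker_le_range χ.ker.subtype χ (by rw [Subgroup.range_subtype])

end Affine

theorem exists_affine_of_normal_of_bijective_smul {G α : Type*} [Group G] [MulAction G α]
    {n : ℕ} (N : Subgroup G) [N.Normal] (φ : Multiplicative (ZMod n) ≃* N) (x₀ : α)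
    (hbij : Function.Bijective fun m : N ↦ m • x₀) :
    ∃ e : α ≃ ZMod n, ∀ g : G, ∃ (a : (ZMod n)ˣ) (b : ZMod n),
      ∀ x, e (g • x) = a * e x + b := by
  let E : ZMod n ≃ α :=
    (Multiplicative.ofAdd.trans φ.toEquiv).trans (Equiv.ofBijective _ hbij)
  have hE (k : ZMod n) : E k = (φ (.ofAdd k) : G) • x₀ := rfl
  refine ⟨E.symm, fun g ↦ ?_⟩
  let ψ : AddAut (ZMod n) :=
    AddEquiv.toMultiplicative.symm (φ.trans ((MulAut.conjNormal g).trans φ.symm))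
  have hψ (k : ZMod n) : g * φ (.ofAdd k) * g⁻¹ = φ (.ofAdd (ψ k)) := by
    rw [← MulAut.conjNormal_apply]
    exact congrArg Subtype.val (φ.apply_symm_apply _).symm
  refine ⟨(ZMod.AddAutEquivUnits n ψ).toMul, E.symm (g • x₀), fun x ↦ ?_⟩
  obtain ⟨k, rfl⟩ := E.surjective x
  rw [E.symm_apply_apply, ← ZMod.addAut_apply_eq_mul, E.symm_apply_eq]
  calc g • E k = (g * φ (.ofAdd k) * g⁻¹) • g • x₀ := by
        rw [hE, ← mul_smul, ← mul_smul, inv_mul_cancel_right]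
    _ = (φ (.ofAdd (ψ k)) : G) • E (E.symm (g • x₀)) := by rw [hψ, E.apply_symm_apply]
    _ = E (ψ k + E.symm (g • x₀)) := by
        rw [hE, hE, ofAdd_add, map_mul, Subgroup.coe_mul, mul_smul]

theorem Subgroup.exists_normal_ne_bot_isMulCommutative {G : Type*} [Group G]
    [Group.IsSolvable G] [Nontrivial G] :
    ∃ N : Subgroup G, N.Normal ∧ N ≠ ⊥ ∧ IsMulCommutative N := by
  classical
  have hex : ∃ n, derivedSeries G n = ⊥ := Group.IsSolvable.solvable
  obtain ⟨m, hm⟩ : ∃ m, Nat.find hex = m + 1 :=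
    Nat.exists_eq_add_one.mpr <| Nat.pos_of_ne_zero fun h ↦ by
      simpa [h] using Nat.find_spec hex
  refine ⟨derivedSeries G m, derivedSeries_normal G m, Nat.find_min hex (by omega), ?_⟩
  rw [← Subgroup.le_centralizer_iff_isMulCommutative,
    ← Subgroup.commutator_eq_bot_iff_le_centralizer, ← derivedSeries_succ, ← hm]
  exact Nat.find_spec hex

theorem bijective_smul_of_isMulCommutative {H α : Type*} [Group H] [IsMulCommutative H]
    [MulAction H α] [FaithfulSMul H α] [IsPretransitive H α] (x₀ : α) :
    Function.Bijective fun h : H ↦ h • x₀ := by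
  refine ⟨fun h k hhk ↦ FaithfulSMul.eq_of_smul_eq_smul (α := α) fun y ↦ ?_,
    exists_smul_eq H x₀⟩
  obtain ⟨m, rfl⟩ := exists_smul_eq H x₀ y
  simp only at hhk
  rw [smul_smul, mul_comm' h, mul_smul, hhk, ← mul_smul, mul_comm', mul_smul]

theorem isPretransitive_of_normal_of_prime_card {G α : Type*} [Group G] [MulAction G α]
    [FaithfulSMul G α] [IsPretransitive G α] (hp : (Nat.card α).Prime) (N : Subgroup G)
    [N.Normal] (hN : N ≠ ⊥) : IsPretransitive N α := by
  have := IsPreprimitive.of_prime_card (G := G) hp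
  refine IsQuasiPreprimitive.isPretransitive_of_normal fun hfix ↦ hN ?_
  refine (Subgroup.eq_bot_iff_forall N).mpr fun g hg ↦
    FaithfulSMul.eq_of_smul_eq_smul (α := α) fun x ↦ ?_
  rw [one_smul]
  exact (Set.eq_univ_iff_forall.mp hfix x) ⟨g, hg⟩

theorem exists_affine_of_isSolvable {G α : Type*} [Group G] [MulAction G α]
    [FaithfulSMul G α] [IsPretransitive G α] [Group.IsSolvable G] {p : ℕ} [Fact p.Prime]
    (hcard : Nat.card α = p) :
    ∃ e : α ≃ ZMod p, ∀ g : G, ∃ (a : (ZMod p)ˣ) (b : ZMod p),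
      ∀ x, e (g • x) = a * e x + b := by
  have hp : (Nat.card α).Prime := hcard ▸ Fact.out
  have : Finite α := Nat.finite_of_card_ne_zero hp.ne_zero
  have : Nontrivial α := Finite.one_lt_card_iff_nontrivial.mp hp.one_lt
  obtain ⟨x₀⟩ : Nonempty α := inferInstance
  have : Nontrivial G := by
    obtain ⟨y, hy⟩ := exists_ne x₀
    obtain ⟨g, hg⟩ := exists_smul_eq G x₀ y
    exact ⟨g, 1, by rintro rfl; exact hy (by rw [← hg, one_smul])⟩
  obtain ⟨N, hN, hN_ne, hN_comm⟩ := Subgroup.exists_normal_ne_bot_isMulCommutative (G := G)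
  have := isPretransitive_of_normal_of_prime_card hp N hN_ne
  have hbij := bijective_smul_of_isMulCommutative (H := N) x₀
  have hcardN : Nat.card N = p := (Nat.card_eq_of_bijective _ hbij).trans hcard
  exact exists_affine_of_normal_of_bijective_smul N
    (mulEquivOfPrimeCardEq (by simp) hcardN) x₀ hbij

theorem Polynomial.Gal.faithfulSMul_rootSet {F : Type*} [Field F] (p : Polynomial F)
    (E : Type*) [Field E] [Algebra F E] [Fact ((p.map (algebraMap F E)).Splits)] :
    FaithfulSMul p.Gal (p.rootSet E) :=
  ⟨fun h ↦ galActionHom_injective p E (Equiv.ext h)⟩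

/-- An irreducible polynomial of prime degree `p` over a field of characteristic zero is
solvable by radicals iff its Galois group, acting on the `p` roots identified with
`ZMod p`, consists (after conjugation by a bijection of the roots with `ZMod p`) of
affine maps `x ↦ a * x + b`. -/
theorem stmt_2 {F : Type*} [Field F] [CharZero F] (p : ℕ) (hp : p.Prime)
    (f : Polynomial F) (hirr : Irreducible f) (hdeg : f.natDegree = p) :
    haveI : Fact ((f.map (algebraMap F f.SplittingField)).Splits) :=
      ⟨Polynomial.SplittingField.splits f⟩
    (IsSolvable f.Gal ↔
      ∃ e : f.rootSet f.SplittingField ≃ ZMod p,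
        ∀ g : f.Gal, ∃ (a : (ZMod p)ˣ) (b : ZMod p),
          ∀ x : f.rootSet f.SplittingField, e (g • x) = (a : ZMod p) * e x + b) := by
  have : Fact ((f.map (algebraMap F f.SplittingField)).Splits) :=
    ⟨Polynomial.SplittingField.splits f⟩
  have : Fact p.Prime := ⟨hp⟩
  -- the statement's `g • x` is this action, not `Polynomial.Gal.galActionAux`
  let := Polynomial.Gal.galAction f f.SplittingField
  have := Polynomial.Gal.faithfulSMul_rootSet f f.SplittingField
  have := Polynomial.Gal.galAction_isPretransitive f f.SplittingField hirr
  have hcard : Nat.card (f.rootSet f.SplittingField) = p := by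
    rw [Nat.card_eq_fintype_card, Polynomial.card_rootSet_eq_natDegree hirr.separable
      (Polynomial.SplittingField.splits f), hdeg]
  constructor
  · -- `IsSolvable` is a deprecated alias, invisible to instance search
    intro (hsolv : Group.IsSolvable f.Gal)
    exact exists_affine_of_isSolvable hcard
  · rintro ⟨e, he⟩
    exact isSolvable_of_forall_exists_affine e he
end

section
/- A transitive solvable subgroup of the symmetric group S_p, for p prime, is conjugate to a subgroup of the affine group AGL(1,p) containing the p-cycle group of translations. -/
/-!
The last nontrivial term `A` of the derived series of `G` is an abelian normal subgroup. A
transitive group of prime degree is primitive, so `A` is transitive; being abelian, it then acts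
regularly, hence is cyclic of order `p`, generated by a `p`-cycle `c`. Relabelling the points so
that `c` becomes `x ↦ x + 1`, each `g ∈ G` satisfies `g c g⁻¹ = cᵏ` for some `k`, that is
`g (x + 1) = g x + k`, which forces `g x = k x + g 0`.
-/

open Equiv MulAction
open scoped commutatorElement

theorem Group.IsSolvable.exists_normal_ne_bot_commute {G : Type*} [Group G] [Group.IsSolvable G]
    [Nontrivial G] : ∃ A : Subgroup G, A.Normal ∧ A ≠ ⊥ ∧ ∀ a b : A, Commute a b := by
  classical
  have hbot : ∃ n, derivedSeries G n = ⊥ := Group.IsSolvable.solvable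
  obtain ⟨n, hn⟩ : ∃ n, Nat.find hbot = n + 1 := by
    refine Nat.exists_eq_add_one.mpr (Nat.pos_of_ne_zero fun h ↦ ?_)
    have := Nat.find_spec hbot
    rw [h, derivedSeries_zero] at this
    exact top_ne_bot this
  refine ⟨derivedSeries G n, derivedSeries_normal G n,
    Nat.find_min hbot (by omega), fun a b ↦ Subtype.ext ?_⟩
  have hab : ⁅(a : G), (b : G)⁆ ∈ derivedSeries G (n + 1) :=
    Subgroup.commutator_mem_commutator a.2 b.2
  rw [← hn, Nat.find_spec hbot, Subgroup.mem_bot] at hab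
  exact commutatorElement_eq_one_iff_mul_comm.mp hab

section Action

variable {H α : Type*} [Group H] [MulAction H α] [FaithfulSMul H α]

theorem MulAction.eq_one_of_smul_eq_self_of_commute [IsPretransitive H α]
    (hcomm : ∀ a b : H, Commute a b) {h : H} {x : α} (hx : h • x = x) : h = 1 :=
  eq_of_smul_eq_smul fun y ↦ by
    obtain ⟨g, rfl⟩ := exists_smul_eq H x y
    rw [smul_smul, (hcomm h g).eq, mul_smul, hx, one_smul]

theorem MulAction.natCard_eq_of_commute [IsPretransitive H α] [Nonempty α]
    (hcomm : ∀ a b : H, Commute a b) : Nat.card H = Nat.card α := by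
  obtain ⟨x⟩ := ‹Nonempty α›
  refine Nat.card_congr (Equiv.ofBijective (fun h : H ↦ h • x) ⟨fun g h hgh ↦ ?_, ?_⟩)
  · have : (g⁻¹ * h) • x = x := by simp only [mul_smul, ← hgh, inv_smul_smul]
    exact inv_mul_eq_one.mp (eq_one_of_smul_eq_self_of_commute hcomm this)
  · exact exists_smul_eq H x

theorem MulAction.isPretransitive_of_normal_of_prime_card [IsPretransitive H α]
    (hp : (Nat.card α).Prime) {A : Subgroup H} [A.Normal] (hA : A ≠ ⊥) :
    IsPretransitive A α := by
  have := IsPreprimitive.of_prime_card (G := H) hp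
  refine IsQuasiPreprimitive.isPretransitive_of_normal fun hfix ↦ hA ?_
  refine (Subgroup.eq_bot_iff_forall A).mpr fun a ha ↦ eq_of_smul_eq_smul (α := α) fun x ↦ ?_
  have : x ∈ fixedPoints A α := hfix ▸ Set.mem_univ x
  simpa using this ⟨a, ha⟩

end Action

theorem Equiv.Perm.isConj_of_orderOf_eq_card {α : Type*} [Fintype α] [DecidableEq α]
    (hp : (Fintype.card α).Prime) {σ τ : Perm α} (hσ : orderOf σ = Fintype.card α)
    (hτ : orderOf τ = Fintype.card α) : IsConj σ τ := by
  have cycleType_eq : ∀ π : Perm α, orderOf π = Fintype.card α →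
      π.cycleType = {Fintype.card α} := fun π hπ ↦ by
    have hcyc := isCycle_of_prime_order'' hp hπ
    rw [hcyc.cycleType, ← hcyc.orderOf, hπ]
  rw [isConj_iff_cycleType_eq, cycleType_eq σ hσ, cycleType_eq τ hτ]

theorem Equiv.addRight_zpow {A : Type*} [AddGroup A] (a : A) (k : ℤ) :
    Equiv.addRight a ^ k = Equiv.addRight (k • a) := by
  have hcomm := AddCommute.self_nsmul a
  induction k using Int.induction_on with
  | zero => ext; simp
  | succ k ih => ext x; simp [zpow_add_one, ih, add_zsmul, add_assoc, (hcomm k).eq]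
  | pred k ih =>
    ext x; simp [zpow_sub_one, ih, sub_zsmul, add_assoc, (hcomm k).neg_left.neg_right.eq]

theorem ZMod.orderOf_addRight_one (p : ℕ) [Fact p.Prime] :
    orderOf (Equiv.addRight (1 : ZMod p)) = p := by
  refine orderOf_eq_prime ?_ fun h ↦ one_ne_zero (α := ZMod p) ?_
  · rw [← zpow_natCast, Equiv.addRight_zpow, natCast_zsmul, nsmul_one, ZMod.natCast_self]
    ext; simp
  · simpa using congr($h 0)

theorem ZMod.eq_mul_add_of_map_add_one {n : ℕ} [NeZero n] {f : ZMod n → ZMod n} {a : ZMod n}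
    (hf : ∀ x, f (x + 1) = f x + a) (x : ZMod n) : f x = a * x + f 0 := by
  have hnat : ∀ k : ℕ, f k = a * k + f 0 := fun k ↦ by
    induction k with
    | zero => simp
    | succ k ih => rw [Nat.cast_succ, hf, ih]; ring
  simpa using hnat x.val

theorem ZMod.exists_unit_of_map_add_one {p : ℕ} [Fact p.Prime] (τ : Perm (ZMod p)) {a : ZMod p}
    (hτ : ∀ x, τ (x + 1) = τ x + a) : ∃ (u : (ZMod p)ˣ) (b : ZMod p), ∀ x, τ x = u * x + b := by
  have ha : a ≠ 0 := fun ha ↦ one_ne_zero (τ.injective (by simpa [ha] using hτ 0))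
  exact ⟨Units.mk0 a ha, τ 0, ZMod.eq_mul_add_of_map_add_one hτ⟩

theorem Equiv.Perm.exists_mem_orderOf_eq_card_conj_mem_zpowers {α : Type*} [Finite α]
    (G : Subgroup (Perm α)) [Group.IsSolvable G] [IsPretransitive G α]
    (hp : (Nat.card α).Prime) :
    ∃ c ∈ G, orderOf c = Nat.card α ∧ ∀ g ∈ G, g * c * g⁻¹ ∈ Subgroup.zpowers c := by
  have : Fact (Nat.card α).Prime := ⟨hp⟩
  have : Nontrivial G := by
    obtain ⟨x, y, hxy⟩ := (Finite.one_lt_card_iff_nontrivial.mp hp.one_lt).exists_pair_ne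
    obtain ⟨g, hg⟩ := exists_smul_eq G x y
    exact ⟨g, 1, by rintro rfl; exact hxy (by simpa using hg)⟩
  obtain ⟨A, hA, hA_ne, hcomm⟩ := Group.IsSolvable.exists_normal_ne_bot_commute (G := G)
  have := isPretransitive_of_normal_of_prime_card hp hA_ne
  have : Nonempty α := (Nat.card_pos_iff.mp hp.pos).1
  have hcard : Nat.card A = Nat.card α := natCard_eq_of_commute hcomm
  obtain ⟨c, hc⟩ := Subgroup.ne_bot_iff_exists_ne_one.mp hA_ne
  refine ⟨c, (c : G).2, ?_, fun g hg ↦ ?_⟩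
  · rw [Subgroup.orderOf_coe, Subgroup.orderOf_coe, ← hcard, ← Nat.card_zpowers,
      zpowers_eq_top_of_prime_card hcard hc, Subgroup.card_top]
  · obtain ⟨k, hk⟩ := Subgroup.mem_zpowers_iff.mp <| mem_zpowers_of_prime_card hcard hc
      (g' := ⟨⟨g, hg⟩ * c * ⟨g, hg⟩⁻¹, hA.conj_mem c c.2 ⟨g, hg⟩⟩)
    exact Subgroup.mem_zpowers_iff.mpr ⟨k, by simpa using congr((($hk : G) : Perm α))⟩

/-- Galois's theorem on solvable transitive groups of prime degree: a transitive solvable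
subgroup of the symmetric group on `ZMod p` (`p` prime) is conjugate to a subgroup of the
affine group `AGL(1,p)` containing all the translations `x ↦ x + b`. -/
theorem stmt_3 (p : ℕ) (hp : p.Prime) (G : Subgroup (Equiv.Perm (ZMod p)))
    (htrans : ∀ x y : ZMod p, ∃ g ∈ G, g x = y) (hsolv : IsSolvable G) :
    ∃ σ : Equiv.Perm (ZMod p),
      (∀ g ∈ G, ∃ (a : (ZMod p)ˣ) (b : ZMod p),
        ∀ x : ZMod p, (σ * g * σ⁻¹) x = (a : ZMod p) * x + b) ∧
      (∀ b : ZMod p, ∃ g ∈ G, ∀ x : ZMod p, (σ * g * σ⁻¹) x = x + b) := by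
  have : Fact p.Prime := ⟨hp⟩
  have : Group.IsSolvable G := hsolv
  have : IsPretransitive G (ZMod p) :=
    ⟨fun x y ↦ let ⟨g, hg, hgx⟩ := htrans x y; ⟨⟨g, hg⟩, hgx⟩⟩
  obtain ⟨c, hcG, hc, hnorm⟩ :=
    Perm.exists_mem_orderOf_eq_card_conj_mem_zpowers G ((Nat.card_zmod p).symm ▸ hp)
  rw [Nat.card_zmod] at hc
  obtain ⟨σ, hσ⟩ := isConj_iff.mp <| Perm.isConj_of_orderOf_eq_card (α := ZMod p)
    (by rwa [ZMod.card]) (by rw [hc, ZMod.card]) (by rw [ZMod.orderOf_addRight_one, ZMod.card])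
  have hσ_zpow (k : ℤ) : σ * c ^ k * σ⁻¹ = Equiv.addRight (k : ZMod p) := by
    rw [← MulAut.conj_apply, map_zpow, MulAut.conj_apply, hσ, Equiv.addRight_zpow, zsmul_one]
  refine ⟨σ, fun g hg ↦ ?_, fun b ↦ ⟨c ^ (b.val : ℤ), G.zpow_mem hcG _, fun x ↦ ?_⟩⟩
  · obtain ⟨k, hk⟩ := Subgroup.mem_zpowers_iff.mp (hnorm g hg)
    have hcomm :
        σ * g * σ⁻¹ * Equiv.addRight 1 = Equiv.addRight (k : ZMod p) * (σ * g * σ⁻¹) := by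
      rw [← hσ, ← hσ_zpow, hk]; group
    exact ZMod.exists_unit_of_map_add_one (σ * g * σ⁻¹) fun x ↦ by simpa using congr($hcomm x)
  · simp [hσ_zpow]
end

section
/- A regular n-gon is constructible with ruler and compass if and only if n is a product of a power of 2 and distinct Fermat primes; in particular the regular 17-gon is constructible. -/
/-!
A constructible number lies in a tower of quadratic extensions of `ℚ`, so its degree over `ℚ`
is a power of `2`. Conversely, if `ℚ(z)/ℚ` is Galois of degree `2 ^ j`, its Galois group is a
`2`-group, in which every proper subgroup has index `2` in a larger one; descending the lattice
of subgroups, each fixed field is obtained from a smaller one by adjoining roots of quadratics.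
For a primitive `n`-th root of unity, `ℚ(ζ)/ℚ` is Galois of degree `φ n`, and `φ n` is a power
of `2` exactly when `n` is a power of `2` times distinct Fermat primes: an odd prime `p ∣ n`
contributes `p - 1` to `φ n`, and `p ^ 2 ∣ n` would make `p` divide `φ n`.
-/

/-- A complex number is constructible (by ruler and compass) if it can be obtained from
the rationals by field operations and extraction of square roots. -/
inductive IsConstructible : ℂ → Prop
  | base (q : ℚ) : IsConstructible (q : ℂ)
  | add {z w : ℂ} : IsConstructible z → IsConstructible w → IsConstructible (z + w)
  | neg {z : ℂ} : IsConstructible z → IsConstructible (-z)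
  | mul {z w : ℂ} : IsConstructible z → IsConstructible w → IsConstructible (z * w)
  | inv {z : ℂ} : IsConstructible z → IsConstructible z⁻¹
  | sqrt {z : ℂ} : IsConstructible (z * z) → IsConstructible z

open IntermediateField Module Polynomial

section QuadraticTower

variable {F E : Type*} [Field F] [Field E] [Algebra F E]

inductive IsQuadraticTower : IntermediateField F E → Prop
  | bot : IsQuadraticTower ⊥
  | sup_adjoin {K : IntermediateField F E} {a : E} :
      IsQuadraticTower K → a * a ∈ K → IsQuadraticTower (K ⊔ F⟮a⟯)

theorem IsQuadraticTower.sup {K₁ K₂ : IntermediateField F E} (h₁ : IsQuadraticTower K₁)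
    (h₂ : IsQuadraticTower K₂) : IsQuadraticTower (K₁ ⊔ K₂) := by
  induction h₂ with
  | bot => simpa using h₁
  | sup_adjoin _ ha ih =>
    rw [← sup_assoc]
    exact ih.sup_adjoin (le_sup_right (a := K₁) ha)

theorem isIntegral_of_mul_self_mem {K : IntermediateField F E} {a : E} (ha : a * a ∈ K) :
    IsIntegral K a :=
  ⟨X ^ 2 - C ⟨a * a, ha⟩, monic_X_pow_sub_C _ two_ne_zero, by simp [sq]⟩

theorem finrank_adjoin_le_two_of_mul_self_mem {K : IntermediateField F E} {a : E}
    (ha : a * a ∈ K) : finrank K K⟮a⟯ ≤ 2 := by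
  rw [adjoin.finrank (isIntegral_of_mul_self_mem ha),
    ← natDegree_X_pow_sub_C (n := 2) (r := (⟨a * a, ha⟩ : K))]
  exact natDegree_le_natDegree
    (minpoly.min K a (monic_X_pow_sub_C _ two_ne_zero) (by simp [sq]))

theorem IsQuadraticTower.exists_finrank_eq_two_pow {K : IntermediateField F E}
    (h : IsQuadraticTower K) : ∃ j, finrank F K = 2 ^ j := by
  induction h with
  | bot => exact ⟨0, IntermediateField.finrank_bot⟩
  | @sup_adjoin K a _ ha ih =>
    obtain ⟨j, hj⟩ := ih
    have hle := finrank_adjoin_le_two_of_mul_self_mem ha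
    have : FiniteDimensional K K⟮a⟯ := adjoin.finiteDimensional (isIntegral_of_mul_self_mem ha)
    have hpos : 0 < finrank K K⟮a⟯ := finrank_pos
    have htower : finrank F ↥(K ⊔ F⟮a⟯) = finrank F K * finrank K K⟮a⟯ := by
      have : Module.Free K K⟮a⟯ := .of_divisionRing _ _
      rw [← restrictScalars_adjoin_eq_sup]
      exact (finrank_mul_finrank F K K⟮a⟯).symm
    interval_cases h : finrank K K⟮a⟯
    · exact ⟨j, by rw [htower, hj, mul_one]⟩
    · exact ⟨j + 1, by rw [htower, hj, pow_succ]⟩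

end QuadraticTower

theorem IsConstructible.exists_isQuadraticTower {z : ℂ} (h : IsConstructible z) :
    ∃ K : IntermediateField ℚ ℂ, IsQuadraticTower K ∧ z ∈ K := by
  induction h with
  | base q => exact ⟨⊥, .bot, SubfieldClass.ratCast_mem ⊥ q⟩
  | add _ _ ihz ihw =>
    obtain ⟨K₁, hK₁, hz⟩ := ihz
    obtain ⟨K₂, hK₂, hw⟩ := ihw
    exact ⟨K₁ ⊔ K₂, hK₁.sup hK₂, add_mem (le_sup_left (b := K₂) hz) (le_sup_right (a := K₁) hw)⟩
  | neg _ ih =>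
    obtain ⟨K, hK, hz⟩ := ih
    exact ⟨K, hK, neg_mem hz⟩
  | mul _ _ ihz ihw =>
    obtain ⟨K₁, hK₁, hz⟩ := ihz
    obtain ⟨K₂, hK₂, hw⟩ := ihw
    exact ⟨K₁ ⊔ K₂, hK₁.sup hK₂, mul_mem (le_sup_left (b := K₂) hz) (le_sup_right (a := K₁) hw)⟩
  | inv _ ih =>
    obtain ⟨K, hK, hz⟩ := ih
    exact ⟨K, hK, inv_mem hz⟩
  | @sqrt z _ ih =>
    obtain ⟨K, hK, hz⟩ := ih
    exact ⟨K ⊔ ℚ⟮z⟯, hK.sup_adjoin hz, le_sup_right (a := K) (mem_adjoin_simple_self ℚ z)⟩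

theorem IsConstructible.exists_finrank_adjoin_eq_two_pow {z : ℂ} (h : IsConstructible z) :
    ∃ j, finrank ℚ ℚ⟮z⟯ = 2 ^ j := by
  obtain ⟨K, hK, hz⟩ := h.exists_isQuadraticTower
  obtain ⟨j, hj⟩ := hK.exists_finrank_eq_two_pow
  have : FiniteDimensional ℚ K := Module.finite_of_finrank_pos (hj ▸ Nat.two_pow_pos j)
  have hdvd : finrank ℚ ℚ⟮z⟯ ∣ 2 ^ j := hj ▸ finrank_dvd_of_le_right (adjoin_simple_le_iff.mpr hz)
  obtain ⟨i, -, hi⟩ := (Nat.dvd_prime_pow Nat.prime_two).mp hdvd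
  exact ⟨i, hi⟩

theorem IsConstructible.of_mul_self_add_mul_add_eq_zero {b c z : ℂ} (hb : IsConstructible b)
    (hc : IsConstructible c) (hz : z * z + b * z + c = 0) : IsConstructible z := by
  have hdisc : IsConstructible (b * b + -((4 : ℚ) * c)) :=
    (hb.mul hb).add ((IsConstructible.base 4).mul hc).neg
  -- `(2 * z + b) ^ 2` is the discriminant
  have hroot : IsConstructible (2 * z + b) :=
    .sqrt (by convert hdisc using 1; push_cast; linear_combination 4 * hz)
  convert (hroot.add hb.neg).mul (IsConstructible.base 2).inv using 1
  push_cast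
  ring

theorem IsConstructible.of_isRoot {p : ℂ[X]} (hp : p.Monic) (hdeg : p.natDegree ≤ 2)
    (hcoeff : ∀ i, IsConstructible (p.coeff i)) {z : ℂ} (hz : p.IsRoot z) :
    IsConstructible z := by
  have hlead := hp.coeff_natDegree
  rw [IsRoot, eval_eq_sum_range] at hz
  interval_cases hd : p.natDegree
  · simp_all
  · simp only [Finset.sum_range_succ, Finset.sum_range_zero, hlead] at hz
    convert (hcoeff 0).neg using 1
    linear_combination hz
  · refine .of_mul_self_add_mul_add_eq_zero (hcoeff 1) (hcoeff 0) ?_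
    simp only [Finset.sum_range_succ, Finset.sum_range_zero, hlead] at hz
    linear_combination hz

theorem IsPGroup.exists_le_relIndex_eq_of_ne_top {G : Type*} [Group G] [Finite G] {p : ℕ}
    [Fact p.Prime] (hG : IsPGroup p G) {H : Subgroup G} (hH : H ≠ ⊤) :
    ∃ H' : Subgroup G, H ≤ H' ∧ H.relIndex H' = p := by
  have hp : p.Prime := Fact.out
  obtain ⟨n, hn⟩ := IsPGroup.iff_card.mp hG
  obtain ⟨a, ha⟩ := IsPGroup.iff_card.mp (hG.to_subgroup H)
  have hlt : a < n := by
    have hle : a ≤ n := (Nat.pow_dvd_pow_iff_le_right hp.one_lt).mp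
      (ha ▸ hn ▸ Subgroup.card_subgroup_dvd_card H)
    refine hle.lt_of_ne fun hean => hH ?_
    rw [← Subgroup.card_eq_iff_eq_top, ha, hn, hean]
  obtain ⟨H', hcard, hle⟩ := Sylow.exists_subgroup_card_pow_succ (hn ▸ pow_dvd_pow p hlt) ha
  have h := Subgroup.relIndex_mul_relIndex ⊥ H H' bot_le hle
  rw [Subgroup.relIndex_bot_left, Subgroup.relIndex_bot_left, ha, hcard, pow_succ] at h
  exact ⟨H', hle, Nat.eq_of_mul_eq_mul_left (pow_pos hp.pos a) h⟩

theorem natDegree_minpoly_fixedField_le_relIndex {F E : Type*} [Field F] [Field E] [Algebra F E]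
    [FiniteDimensional F E] {H H' : Subgroup Gal(E/F)} (hle : H ≤ H') {x : E}
    (hx : x ∈ fixedField H) : (minpoly (fixedField H') x).natDegree ≤ H.relIndex H' := by
  have hK : fixedField H' ≤ fixedField H := fixedField_antitone hle
  have hrel : relfinrank (fixedField H') (fixedField H) = H.relIndex H' := by
    have h := relfinrank_mul_finrank_top hK
    rw [finrank_fixedField_eq_card, finrank_fixedField_eq_card, ← Subgroup.relIndex_bot_left H',
      ← Subgroup.relIndex_mul_relIndex _ _ _ bot_le hle, Subgroup.relIndex_bot_left, mul_comm] at h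
    exact Nat.eq_of_mul_eq_mul_left Nat.card_pos h
  calc (minpoly (fixedField H') x).natDegree
      = finrank (fixedField H') (fixedField H')⟮x⟯ :=
        (adjoin.finrank (IsIntegral.of_finite _ x)).symm
    _ ≤ finrank (fixedField H') (extendScalars hK) :=
        finrank_le_of_le_right (adjoin_simple_le_iff.mpr hx)
    _ = H.relIndex H' := by rw [← relfinrank_eq_finrank_of_le, hrel]

theorem isConstructible_of_isPGroup {L : Type*} [Field L] [Algebra ℚ L] [FiniteDimensional ℚ L]
    [IsGalois ℚ L] (hG : IsPGroup 2 Gal(L/ℚ)) (f : L →ₐ[ℚ] ℂ) (x : L) :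
    IsConstructible (f x) := by
  suffices h : ∀ H : Subgroup Gal(L/ℚ), ∀ x ∈ fixedField H, IsConstructible (f x) from
    h ⊥ x (by rw [fixedField_bot]; exact mem_top)
  intro H
  induction H using WellFoundedGT.induction with
  | _ H ih =>
    intro x hx
    by_cases hH : H = ⊤
    · rw [hH, IsGalois.fixedField_top] at hx
      obtain ⟨q, rfl⟩ := mem_bot.mp hx
      rw [AlgHom.commutes, eq_ratCast]
      exact .base q
    · obtain ⟨H', hle, hidx⟩ := hG.exists_le_relIndex_eq_of_ne_top hH
      have hlt : H < H' := hle.lt_of_ne fun h => by simp [h] at hidx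
      set K := fixedField H'
      refine IsConstructible.of_isRoot
        (p := (minpoly K x).map ((f : L →+* ℂ).comp (algebraMap K L)))
        ((minpoly.monic (IsIntegral.of_finite K x)).map _) ?_ (fun i => ?_) ?_
      · rw [natDegree_map]
        exact hidx ▸ natDegree_minpoly_fixedField_le_relIndex hle hx
      · rw [coeff_map]
        exact ih H' hlt _ ((minpoly K x).coeff i).2
      · have h := hom_eval₂ (minpoly K x) (algebraMap K L) (f : L →+* ℂ) x
        rw [← aeval_def, minpoly.aeval, map_zero] at h
        exact (eval_map _ _).trans h.symm

theorem isConstructible_iff_exists_finrank_eq_two_pow {z : ℂ} [IsGalois ℚ ℚ⟮z⟯] :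
    IsConstructible z ↔ ∃ j, finrank ℚ ℚ⟮z⟯ = 2 ^ j := by
  refine ⟨IsConstructible.exists_finrank_adjoin_eq_two_pow, fun ⟨j, hj⟩ => ?_⟩
  have : FiniteDimensional ℚ ℚ⟮z⟯ := Module.finite_of_finrank_pos (hj ▸ Nat.two_pow_pos j)
  have hG : IsPGroup 2 Gal(ℚ⟮z⟯/ℚ) := .of_card (by rw [IsGalois.card_aut_eq_finrank, hj])
  exact isConstructible_of_isPGroup hG (val ℚ⟮z⟯) ⟨z, mem_adjoin_simple_self ℚ z⟩

theorem IsPrimitiveRoot.isGalois_adjoin_rat {L : Type*} [Field L] [CharZero L] {ζ : L}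
    {n : ℕ} [NeZero n] (hζ : IsPrimitiveRoot ζ n) : IsGalois ℚ ℚ⟮ζ⟯ := by
  have : IsCyclotomicExtension {n} ℚ ℚ⟮ζ⟯.toSubalgebra := by
    rw [adjoin_simple_toSubalgebra_of_isAlgebraic
      ((hζ.isIntegral (NeZero.pos n)).tower_top (A := ℚ)).isAlgebraic]
    exact hζ.adjoin_isCyclotomicExtension ℚ
  -- `this` carries the subalgebra's `ℚ`-algebra structure, not `DivisionRing.toRatAlgebra`
  exact @IsCyclotomicExtension.isGalois {n} ℚ _ _ _ _ this

theorem IsPrimitiveRoot.finrank_adjoin_rat {L : Type*} [Field L] [CharZero L] {ζ : L} {n : ℕ}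
    (hζ : IsPrimitiveRoot ζ n) (hn : 0 < n) : finrank ℚ ℚ⟮ζ⟯ = n.totient := by
  rw [adjoin.finrank ((hζ.isIntegral hn).tower_top (A := ℚ)), ← cyclotomic_eq_minpoly_rat hζ hn,
    natDegree_cyclotomic]

theorem IsPrimitiveRoot.isConstructible_iff {ζ : ℂ} {n : ℕ} (hζ : IsPrimitiveRoot ζ n)
    (hn : 0 < n) : IsConstructible ζ ↔ ∃ j, n.totient = 2 ^ j := by
  have : NeZero n := ⟨hn.ne'⟩
  have := hζ.isGalois_adjoin_rat
  rw [isConstructible_iff_exists_finrank_eq_two_pow, hζ.finrank_adjoin_rat hn]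

def IsFermatPrime (q : ℕ) : Prop := q.Prime ∧ ∃ m : ℕ, q = 2 ^ 2 ^ m + 1

theorem Nat.Prime.isFermatPrime_of_sub_one_dvd_two_pow {p j : ℕ} (hp : p.Prime) (hp2 : p ≠ 2)
    (h : p - 1 ∣ 2 ^ j) : IsFermatPrime p := by
  obtain ⟨i, -, hi⟩ := (Nat.dvd_prime_pow Nat.prime_two).mp h
  have hpi : p = 2 ^ i + 1 := by have := hp.one_lt; omega
  have hi0 : i ≠ 0 := by
    rintro rfl
    exact hp2 hpi
  obtain ⟨m, rfl⟩ := Nat.pow_of_pow_add_prime one_lt_two hi0 (hpi ▸ hp)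
  exact ⟨hp, m, hpi⟩

theorem Nat.squarefree_of_odd_of_totient_dvd_two_pow {m j : ℕ} (hm : Odd m)
    (h : m.totient ∣ 2 ^ j) : Squarefree m := by
  refine Nat.squarefree_iff_prime_squarefree.mpr fun p hp hpp => ?_
  have hp_dvd : p ∣ (p * p).totient := by
    rw [← sq, Nat.totient_prime_pow hp two_pos]
    exact dvd_mul_of_dvd_left (dvd_pow_self p one_ne_zero) _
  have hp2 : p = 2 :=
    (Nat.prime_dvd_prime_iff_eq hp Nat.prime_two).mp
      (hp.dvd_of_dvd_pow (hp_dvd.trans ((Nat.totient_dvd_of_dvd hpp).trans h)))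
  exact hm.not_two_dvd_nat (hp2 ▸ (dvd_mul_left p p).trans hpp)

theorem exists_isFermatPrime_of_totient_eq_two_pow {n j : ℕ} (h : n.totient = 2 ^ j) :
    ∃ (k : ℕ) (s : Finset ℕ), (∀ q ∈ s, IsFermatPrime q) ∧ n = 2 ^ k * ∏ q ∈ s, q := by
  have hn : n ≠ 0 := by
    rintro rfl
    exact (Nat.two_pow_pos j).ne h
  obtain ⟨k, m, hm, rfl⟩ := Nat.exists_eq_two_pow_mul_odd hn
  have hφ : m.totient ∣ 2 ^ j := h ▸ Nat.totient_dvd_of_dvd (dvd_mul_left m _)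
  refine ⟨k, m.primeFactors, fun q hq => ?_, ?_⟩
  · have hqp := Nat.prime_of_mem_primeFactors hq
    have hqm := Nat.dvd_of_mem_primeFactors hq
    refine hqp.isFermatPrime_of_sub_one_dvd_two_pow (j := j) ?_ ?_
    · rintro rfl
      exact hm.not_two_dvd_nat hqm
    · rw [← Nat.totient_prime hqp]
      exact (Nat.totient_dvd_of_dvd hqm).trans hφ
  · rw [Nat.prod_primeFactors_of_squarefree (Nat.squarefree_of_odd_of_totient_dvd_two_pow hm hφ)]

theorem exists_totient_eq_two_pow_of_isFermatPrime (k : ℕ) {s : Finset ℕ}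
    (hs : ∀ q ∈ s, IsFermatPrime q) : ∃ j, (2 ^ k * ∏ q ∈ s, q).totient = 2 ^ j := by
  classical
  induction s using Finset.induction_on with
  | empty =>
    cases k with
    | zero => exact ⟨0, by simp⟩
    | succ k => exact ⟨k, by simp [Nat.totient_prime_pow_succ Nat.prime_two]⟩
  | @insert q s hq ih =>
    obtain ⟨j, hj⟩ := ih fun r hr => hs r (Finset.mem_insert_of_mem hr)
    obtain ⟨hqp, m, hm⟩ := hs q (Finset.mem_insert_self q s)
    have hndvd : ¬q ∣ 2 ^ k * ∏ r ∈ s, r := by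
      intro hdvd
      rcases hqp.dvd_mul.mp hdvd with h2 | hprod
      · have := Nat.le_of_dvd two_pos (hqp.dvd_of_dvd_pow h2)
        have := Nat.one_lt_two_pow (pow_ne_zero m two_ne_zero)
        omega
      · obtain ⟨r, hr, hqr⟩ := (Prime.dvd_finsetProd_iff hqp.prime _).mp hprod
        have hrp := (hs r (Finset.mem_insert_of_mem hr)).1
        exact hq ((Nat.prime_dvd_prime_iff_eq hqp hrp).mp hqr ▸ hr)
    refine ⟨2 ^ m + j, ?_⟩
    rw [Finset.prod_insert hq, mul_left_comm, Nat.totient_mul_of_prime_of_not_dvd hqp hndvd, hj,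
      hm, Nat.add_sub_cancel, pow_add]

theorem exists_totient_eq_two_pow_iff {n : ℕ} : (∃ j, n.totient = 2 ^ j) ↔
    ∃ (k : ℕ) (s : Finset ℕ), (∀ q ∈ s, IsFermatPrime q) ∧ n = 2 ^ k * ∏ q ∈ s, q :=
  ⟨fun ⟨_, h⟩ => exists_isFermatPrime_of_totient_eq_two_pow h,
    fun ⟨k, _, hs, hn⟩ => hn ▸ exists_totient_eq_two_pow_of_isFermatPrime k hs⟩

/-- Gauss–Wantzel: the regular `n`-gon is constructible iff `n` is a power of `2` times a
product of distinct Fermat primes; in particular the regular 17-gon is constructible. -/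
theorem stmt_14 :
    (∀ n : ℕ, 0 < n →
      (IsConstructible (Complex.exp (2 * Real.pi * Complex.I / n)) ↔
        ∃ (k : ℕ) (s : Finset ℕ),
          (∀ q ∈ s, Nat.Prime q ∧ ∃ m : ℕ, q = 2 ^ 2 ^ m + 1) ∧
          n = 2 ^ k * ∏ q ∈ s, q)) ∧
    IsConstructible (Complex.exp (2 * Real.pi * Complex.I / 17)) := by
  refine ⟨fun n hn => ((Complex.isPrimitiveRoot_exp n hn.ne').isConstructible_iff hn).trans
    exists_totient_eq_two_pow_iff, ?_⟩
  have h17 := (Complex.isPrimitiveRoot_exp 17 (by norm_num)).isConstructible_iff (by norm_num)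
  push_cast at h17
  exact h17.mpr ⟨4, by rw [Nat.totient_prime (by norm_num)]; rfl⟩
end
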